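/- Assume every nonzero element of D is invertible (D is a division algebra). Then the set {(x,y) ∈ D × D : (x,y) ≠ (0,0) and x·star(y) = y·star(x)} is exactly one G-orbit, namely the G-orbit of (0, 1). -/

import Mathlib

open Matrix Quaternion

/-!
The orbit of `(0, 1)` consists of the pairs `(c • u, d • u)` with `u` a unit and `(c, d)` the
(nonzero) second row of `g₃`. Conversely, if `y ≠ 0` and `x ȳ = y x̄`, then `x ȳ` is
self-conjugate, hence a scalar since `2 ≠ 0`; as `ȳ y` is a nonzero scalar, right multiplication
by `y` shows that `x` is a scalar multiple of `y`. If `y = 0`, then `x` itself is a unit.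
-/

/-- The right action of `G = Dˣ × Dˣ × GL₂(F)` on `D × D` for the quaternion algebra
`D = ℍ[F, c₁, c₂]`:
`(x,y)·(g₁,g₂,g₃) := (a·g₁⁻¹xg₂ + c·g₁⁻¹yg₂, b·g₁⁻¹xg₂ + d·g₁⁻¹yg₂)` where
`g₃ = [[a,b],[c,d]]`. -/
noncomputable def actD {F : Type*} [Field F] {c₁ c₂ : F}
    (v : ℍ[F, c₁, c₂] × ℍ[F, c₁, c₂])
    (g : ℍ[F, c₁, c₂]ˣ × ℍ[F, c₁, c₂]ˣ × GL (Fin 2) F) :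
    ℍ[F, c₁, c₂] × ℍ[F, c₁, c₂] :=
  (((g.2.2 : Matrix (Fin 2) (Fin 2) F) 0 0) • ((g.1⁻¹ : ℍ[F, c₁, c₂]ˣ) * v.1 * g.2.1) +
     ((g.2.2 : Matrix (Fin 2) (Fin 2) F) 1 0) • ((g.1⁻¹ : ℍ[F, c₁, c₂]ˣ) * v.2 * g.2.1),
   ((g.2.2 : Matrix (Fin 2) (Fin 2) F) 0 1) • ((g.1⁻¹ : ℍ[F, c₁, c₂]ˣ) * v.1 * g.2.1) +
     ((g.2.2 : Matrix (Fin 2) (Fin 2) F) 1 1) • ((g.1⁻¹ : ℍ[F, c₁, c₂]ˣ) * v.2 * g.2.1))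

namespace QuaternionAlgebra

variable {R : Type*} [CommRing R] {c₁ c₂ c₃ : R}

theorem eq_coe_re_of_star_eq_self [NoZeroDivisors R] (h2 : (2 : R) ≠ 0)
    {a : ℍ[R,c₁,c₂,c₃]} (h : star a = a) : a = a.re := by
  have neg_eq_self : ∀ x : R, -x = x → x = 0 := fun x hx ↦
    (mul_eq_zero.mp (by rw [two_mul]; linear_combination -hx : 2 * x = 0)).resolve_left h2
  have hI := neg_eq_self _ (congrArg imI h)
  have hJ := neg_eq_self _ (congrArg imJ h)
  have hK := neg_eq_self _ (congrArg imK h)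
  ext <;> simp [hI, hJ, hK]

theorem re_star_mul_self_ne_zero [Nontrivial R] {y : ℍ[R,c₁,c₂,c₃]} (hy : IsUnit y) :
    (star y * y).re ≠ 0 := by
  intro h
  have := star_mul_eq_coe y
  rw [h, coe_zero] at this
  exact (hy.star.mul hy).ne_zero this

theorem smul_mul_star_smul_comm (u : ℍ[R,c₁,c₂,c₃]) (c d : R) :
    c • u * star (d • u) = d • u * star (c • u) := by
  simp only [star_smul, smul_mul_smul_comm, mul_comm c d]

theorem exists_eq_smul_of_mul_star_comm {F : Type*} [Field F] (h2 : (2 : F) ≠ 0)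
    {c₁ c₂ c₃ : F} {x y : ℍ[F,c₁,c₂,c₃]} (hy : IsUnit y) (h : x * star y = y * star x) :
    ∃ t : F, x = t • y := by
  have hscalar : x * star y = (x * star y).re :=
    eq_coe_re_of_star_eq_self h2 (by rw [star_mul, star_star, h])
  have hnorm := re_star_mul_self_ne_zero hy
  refine ⟨(x * star y).re / (star y * y).re, ?_⟩
  have key : (star y * y).re • x = (x * star y).re • y := by
    rw [← mul_coe_eq_smul, ← coe_mul_eq_smul, ← star_mul_eq_coe, ← hscalar, mul_assoc]
  rw [div_eq_inv_mul, mul_smul, ← key, inv_smul_smul₀ hnorm]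

end QuaternionAlgebra

namespace Matrix.GeneralLinearGroup

theorem row_one_ne_zero {R : Type*} [CommRing R] [Nontrivial R] (g : GL (Fin 2) R) :
    ((g : Matrix (Fin 2) (Fin 2) R) 1 0, (g : Matrix (Fin 2) (Fin 2) R) 1 1) ≠ 0 := by
  intro h
  have hdet := det_eq_zero_of_row_eq_zero (A := (g : Matrix (Fin 2) (Fin 2) R)) 1 fun j ↦ by
    fin_cases j
    exacts [congrArg Prod.fst h, congrArg Prod.snd h]
  exact ((isUnit_iff_isUnit_det _).mp g.isUnit).ne_zero hdet

theorem exists_row_one_eq {F : Type*} [Field F] {c d : F} (h : (c, d) ≠ 0) :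
    ∃ g : GL (Fin 2) F, (g : Matrix (Fin 2) (Fin 2) F) 1 0 = c ∧
      (g : Matrix (Fin 2) (Fin 2) F) 1 1 = d := by
  by_cases hd : d = 0
  · have hc : c ≠ 0 := fun hc ↦ h (by simp [hc, hd])
    exact ⟨mkOfDetNeZero !![0, -c⁻¹; c, d] (by simp [det_fin_two_of, hc]), rfl, rfl⟩
  · exact ⟨mkOfDetNeZero !![d⁻¹, 0; c, d] (by simp [det_fin_two_of, hd]), rfl, rfl⟩

end Matrix.GeneralLinearGroup

section Orbit

variable {F : Type*} [Field F] {c₁ c₂ : F}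

theorem actD_zero_one (g : ℍ[F, c₁, c₂]ˣ × ℍ[F, c₁, c₂]ˣ × GL (Fin 2) F) :
    actD ((0 : ℍ[F, c₁, c₂]), (1 : ℍ[F, c₁, c₂])) g =
      ((g.2.2 : Matrix (Fin 2) (Fin 2) F) 1 0 • ((g.1⁻¹ * g.2.1 : ℍ[F, c₁, c₂]ˣ) : ℍ[F, c₁, c₂]),
        (g.2.2 : Matrix (Fin 2) (Fin 2) F) 1 1 •
          ((g.1⁻¹ * g.2.1 : ℍ[F, c₁, c₂]ˣ) : ℍ[F, c₁, c₂])) := by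
  simp [actD]

theorem exists_actD_zero_one_eq_iff (w : ℍ[F, c₁, c₂] × ℍ[F, c₁, c₂]) :
    (∃ g, actD ((0 : ℍ[F, c₁, c₂]), (1 : ℍ[F, c₁, c₂])) g = w) ↔
      ∃ (u : ℍ[F, c₁, c₂]ˣ) (c d : F),
        (c, d) ≠ 0 ∧ (c • (u : ℍ[F, c₁, c₂]), d • (u : ℍ[F, c₁, c₂])) = w := by
  constructor
  · rintro ⟨g, rfl⟩
    exact ⟨_, _, _, g.2.2.row_one_ne_zero, (actD_zero_one g).symm⟩
  · rintro ⟨u, c, d, hcd, rfl⟩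
    obtain ⟨M, hc, hd⟩ := Matrix.GeneralLinearGroup.exists_row_one_eq hcd
    exact ⟨(1, u, M), by simp [actD_zero_one, hc, hd]⟩

end Orbit

/-- if `D = ℍ[F, c₁, c₂]` is a division algebra, then the set of nonzero
pairs `(x,y)` with `x·star y = y·star x` is exactly the `G`-orbit of `(0, 1)`. -/
theorem stmt4 {F : Type*} [Field F] (h2 : (2 : F) ≠ 0) (c₁ c₂ : F)
    (hdiv : ∀ x : ℍ[F, c₁, c₂], x ≠ 0 → IsUnit x) :
    {v : ℍ[F, c₁, c₂] × ℍ[F, c₁, c₂] |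
        v ≠ (0, 0) ∧ v.1 * star v.2 = v.2 * star v.1} =
      {w | ∃ g : ℍ[F, c₁, c₂]ˣ × ℍ[F, c₁, c₂]ˣ × GL (Fin 2) F,
        actD ((0 : ℍ[F, c₁, c₂]), (1 : ℍ[F, c₁, c₂])) g = w} := by
  ext ⟨x, y⟩
  rw [Set.mem_ofPred_eq, Set.mem_ofPred_eq, exists_actD_zero_one_eq_iff]
  constructor
  · rintro ⟨hne, hcomm⟩
    by_cases hy : y = 0
    · subst hy
      obtain ⟨u, rfl⟩ := hdiv x fun hx ↦ hne (by rw [hx])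
      exact ⟨u, 1, 0, by simp, by simp⟩
    · obtain ⟨u, rfl⟩ := hdiv y hy
      obtain ⟨t, rfl⟩ := QuaternionAlgebra.exists_eq_smul_of_mul_star_comm h2 u.isUnit hcomm
      exact ⟨u, t, 1, by simp, by simp⟩
  · rintro ⟨u, c, d, hcd, hw⟩
    rw [← hw]
    refine ⟨fun h ↦ hcd ?_, QuaternionAlgebra.smul_mul_star_smul_comm _ _ _⟩
    simpa [Prod.ext_iff, smul_eq_zero, u.ne_zero] using h
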